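/- Let G be a finite group with subgroups A, B, M satisfying conditions (1)–(4) of the soft plane construction. Then M is uniquely determined by A and B: if M' is another subgroup with A, B, M' satisfying the same conditions, then M' = M. -/

import Mathlib

open scoped Pointwise

/-!
Write `T = ABA \ A`. Condition (4) makes the multiplication map `A × (B \ A) × A → T`
have fibres of size at most `|A ∩ B|²`, so `|T| ≥ n²(n - 1)k = |G| - n²k`. Any subgroup
`K ⊇ A` of order `n²k` with `KB = G` meets `B` only in `A ∩ B` (product formula), hence is
disjoint from `T`, and by counting `K` is exactly the complement of `T`. So `AM` and,
symmetrically, `BM` depend only on `A` and `B`, and `M = AM ∩ BM` because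
`|AM ∩ BM| = |AM||BM|/|G| = |M|`.
-/

open Set Subgroup

theorem Set.eq_compl_of_disjoint_of_card_le {α : Type*} [Finite α] {s t : Set α}
    (h : Disjoint s t) (hcard : Nat.card α ≤ s.ncard + t.ncard) : t = sᶜ :=
  eq_of_subset_of_ncard_le h.symm.subset_compl_right (by rw [ncard_compl]; omega)

section

variable {G : Type*} [Group G]

namespace Subgroup

theorem card_subgroupOf (H K : Subgroup G) : Nat.card (H.subgroupOf K) = Nat.card ↥(H ⊓ K) := by
  rw [← subgroupOf_map_subtype, card_map_of_injective K.subtype_injective]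

theorem card_mul_card_eq_card_mul_card_inf [Finite G] {H K : Subgroup G}
    (h : (H : Set G) * (K : Set G) = univ) :
    Nat.card H * Nat.card K = Nat.card G * Nat.card ↥(H ⊓ K) := by
  have hsmul (x : H) (g : G) : x • (g : G ⧸ K) = ((x * g : G) : G ⧸ K) := rfl
  have hstab : MulAction.stabilizer H ((1 : G) : G ⧸ K) = K.subgroupOf H := by
    ext x
    simp [mem_subgroupOf, hsmul, QuotientGroup.eq]
  have horbit : MulAction.orbit H ((1 : G) : G ⧸ K) = univ := by
    refine eq_univ_of_forall (QuotientGroup.mk_surjective.forall.2 fun g => ?_)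
    obtain ⟨x, hx, y, hy, rfl⟩ := h.symm ▸ mem_univ g
    exact ⟨⟨x, hx⟩, by simpa [hsmul, QuotientGroup.eq] using hy⟩
  have hindex := MulAction.index_stabilizer H ((1 : G) : G ⧸ K)
  rw [horbit, ncard_univ, hstab, ← index_eq_card] at hindex
  rw [← index_mul_card (K.subgroupOf H), card_subgroupOf, hindex, ← index_mul_card K, inf_comm]
  ring

theorem left_le_of_coe_eq_mul {H A M : Subgroup G}
    (h : (H : Set G) = (A : Set G) * (M : Set G)) : A ≤ H :=
  fun a ha => by simpa [← SetLike.mem_coe, h] using mul_mem_mul ha M.one_mem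

theorem right_le_of_coe_eq_mul {H A M : Subgroup G}
    (h : (H : Set G) = (A : Set G) * (M : Set G)) : M ≤ H :=
  fun m hm => by simpa [← SetLike.mem_coe, h] using mul_mem_mul A.one_mem hm

theorem coe_mul_mul_eq_univ {A M B : Subgroup G}
    (h : ∀ g : G, ∃ a ∈ A, ∃ m ∈ M, ∃ b ∈ B, g = a * m * b) :
    (A : Set G) * (M : Set G) * (B : Set G) = univ :=
  eq_univ_of_forall fun g => by
    obtain ⟨a, ha, m, hm, b, hb, rfl⟩ := h g
    exact mul_mem_mul (mul_mem_mul ha hm) hb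

theorem coe_mul_mul_eq_univ_rev {A M B : Subgroup G}
    (h : (A : Set G) * (M : Set G) * (B : Set G) = univ) :
    (B : Set G) * (M : Set G) * (A : Set G) = univ := by
  simpa [mul_inv_rev, mul_assoc] using congrArg Inv.inv h

end Subgroup

section DoubleCosetCount

variable {A B : Subgroup G}

theorem mem_of_mul_mul_eq_mul_mul (h4 : (A : Set G) * B ∩ (B * A) ⊆ A ∪ B)
    {a₁ a₂ a₁' a₂' b b' : G} (ha₁ : a₁ ∈ A) (ha₂ : a₂ ∈ A) (ha₁' : a₁' ∈ A) (ha₂' : a₂' ∈ A)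
    (hb : b ∈ B) (hbA : b ∉ A) (hb' : b' ∈ B) (h : a₁ * b * a₂ = a₁' * b' * a₂') :
    a₁'⁻¹ * a₁ ∈ B ∧ a₂' * a₂⁻¹ ∈ B := by
  have ha : a₁'⁻¹ * a₁ ∈ A := mul_mem (inv_mem ha₁') ha₁
  have hu : a₁'⁻¹ * a₁ * b = b' * (a₂' * a₂⁻¹) := calc
    a₁'⁻¹ * a₁ * b = a₁'⁻¹ * (a₁ * b * a₂) * a₂⁻¹ := by group
    _ = b' * (a₂' * a₂⁻¹) := by rw [h]; group
  have huB : a₁'⁻¹ * a₁ * b ∈ B := by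
    have hba : b' * (a₂' * a₂⁻¹) ∈ (B : Set G) * A :=
      mul_mem_mul hb' (mul_mem ha₂' (inv_mem ha₂))
    exact (h4 (mem_inter (mul_mem_mul ha hb) (hu ▸ hba))).resolve_left
      fun huA => hbA ((A.mul_mem_cancel_left ha).1 huA)
  exact ⟨(B.mul_mem_cancel_right hb).1 huB, (B.mul_mem_cancel_left hb').1 (hu ▸ huB)⟩

theorem card_mul_card_sdiff_mul_card_le [Finite G] (h4 : (A : Set G) * B ∩ (B * A) ⊆ A ∪ B) :
    Nat.card A * Nat.card ↥((B : Set G) \ A) * Nat.card A ≤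
      (((A : Set G) * B * A) \ A).ncard * (Nat.card ↥(A ⊓ B) * Nat.card ↥(A ⊓ B)) := by
  set T := ((A : Set G) * B * A) \ A
  have hrep (x : T) : ∃ a₁ ∈ A, ∃ b ∈ B, ∃ a₂ ∈ A, a₁ * b * a₂ = (x : G) := by
    obtain ⟨_, ⟨_, ⟨a₁, ha₁, b, hb, rfl⟩, a₂, ha₂, rfl⟩, -⟩ := x
    exact ⟨a₁, ha₁, b, hb, a₂, ha₂, rfl⟩
  choose r₁ hr₁ r hr r₂ hr₂ hrep using hrep
  let prod (p : A × ↥((B : Set G) \ A) × A) : T :=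
    ⟨p.1 * p.2.1 * p.2.2, mul_mem_mul (mul_mem_mul p.1.2 p.2.1.2.1) p.2.2.2,
      fun h => p.2.1.2.2 <| (A.mul_mem_cancel_left p.1.2).1 ((A.mul_mem_cancel_right p.2.2.2).1 h)⟩
  have hfib (p : A × ↥((B : Set G) \ A) × A) :=
    mem_of_mul_mul_eq_mul_mul h4 p.1.2 p.2.2.2 (hr₁ (prod p)) (hr₂ (prod p)) p.2.1.2.1 p.2.1.2.2
      (hr (prod p)) (hrep (prod p)).symm
  -- `p` is recorded by its product and its position relative to the chosen representative
  let F (p : A × ↥((B : Set G) \ A) × A) : T × ↥(A ⊓ B) × ↥(A ⊓ B) :=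
    (prod p, ⟨(r₁ (prod p))⁻¹ * p.1, mem_inf.2 ⟨mul_mem (inv_mem (hr₁ _)) p.1.2, (hfib p).1⟩⟩,
      ⟨r₂ (prod p) * (p.2.2 : G)⁻¹, mem_inf.2 ⟨mul_mem (hr₂ _) (inv_mem p.2.2.2), (hfib p).2⟩⟩)
  have hF : Function.Injective F := by
    rintro p q hpq
    simp only [F, Prod.mk.injEq] at hpq
    obtain ⟨hx, h₁, h₂⟩ := hpq
    replace h₁ : (r₁ (prod p))⁻¹ * (p.1 : G) = (r₁ (prod q))⁻¹ * q.1 :=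
      congrArg Subtype.val h₁
    replace h₂ : r₂ (prod p) * (p.2.2 : G)⁻¹ = r₂ (prod q) * (q.2.2 : G)⁻¹ :=
      congrArg Subtype.val h₂
    rw [hx] at h₁ h₂
    have ha₁ : (p.1 : G) = q.1 := mul_left_cancel h₁
    have ha₂ : (p.2.2 : G) = q.2.2 := inv_injective (mul_left_cancel h₂)
    have hb : (p.2.1 : G) = q.2.1 := by
      have := congrArg Subtype.val hx
      simp only [prod, ha₁, ha₂] at this
      exact mul_left_cancel (mul_right_cancel this)
    exact Prod.ext (Subtype.ext ha₁) (Prod.ext (Subtype.ext hb) (Subtype.ext ha₂))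
  simpa [Nat.card_prod, Nat.card_coe_set_eq, mul_assoc] using Nat.card_le_card_of_injective F hF

theorem disjoint_mul_mul_sdiff {K : Subgroup G} (hAK : A ≤ K) (hKB : K ⊓ B ≤ A) :
    Disjoint (((A : Set G) * B * A) \ A) K := by
  rw [Set.disjoint_left]
  rintro _ ⟨⟨_, ⟨a₁, ha₁, b, hb, rfl⟩, a₂, ha₂, rfl⟩, hA⟩ hK
  have hbK : b ∈ K :=
    (K.mul_mem_cancel_left (hAK ha₁)).1 ((K.mul_mem_cancel_right (hAK ha₂)).1 hK)
  exact hA (mul_mem (mul_mem ha₁ (hKB (mem_inf.2 ⟨hbK, hb⟩))) ha₂)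

end DoubleCosetCount

section SoftPlane

variable [Finite G] {A B M K : Subgroup G} {n k : ℕ}

theorem coe_eq_compl_mul_mul_sdiff (hA : Nat.card A = n * k) (hB : Nat.card B = n * k)
    (hk : Nat.card ↥(A ⊓ B) = k) (hG : Nat.card G = n ^ 3 * k)
    (h4 : (A : Set G) * B ∩ (B * A) ⊆ A ∪ B)
    (hK : (K : Set G) = (A : Set G) * (M : Set G)) (hKcard : Nat.card K = n ^ 2 * k)
    (hAMB : (A : Set G) * (M : Set G) * (B : Set G) = univ) :
    (K : Set G) = (((A : Set G) * B * A) \ A)ᶜ := by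
  have hk0 : 0 < k := hk ▸ Nat.card_pos
  have hG0 : 0 < n ^ 3 * k := hG ▸ Nat.card_pos
  have hAK : A ≤ K := left_le_of_coe_eq_mul hK
  have hKB : K ⊓ B ≤ A := by
    have hKBuniv : (K : Set G) * (B : Set G) = univ := hK ▸ hAMB
    have hprod := card_mul_card_eq_card_mul_card_inf hKBuniv
    rw [hKcard, hB, hG] at hprod
    have hcard : Nat.card ↥(K ⊓ B) = k :=
      (Nat.eq_of_mul_eq_mul_left hG0 (by rw [← hprod]; ring)).symm
    rw [← eq_of_le_of_card_ge (inf_le_inf_right B hAK) (by rw [hcard, hk])]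
    exact inf_le_left
  apply eq_compl_of_disjoint_of_card_le (disjoint_mul_mul_sdiff hAK hKB)
  set m := ((B : Set G) \ A).ncard
  set t := (((A : Set G) * B * A) \ A).ncard
  have hm : m + k = n * k := by
    rw [← hB, ← hk, ← SetLike.coe_sort_coe B, ← SetLike.coe_sort_coe (A ⊓ B),
      Nat.card_coe_set_eq, Nat.card_coe_set_eq, coe_inf, inter_comm,
      ← ncard_inter_add_ncard_sdiff_eq_ncard (B : Set G) A, add_comm]
  have hcount := card_mul_card_sdiff_mul_card_le h4
  rw [hA, hk, Nat.card_coe_set_eq] at hcount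
  have ht : n * n * m ≤ t :=
    Nat.le_of_mul_le_mul_right (by linarith) (Nat.mul_pos hk0 hk0)
  rw [hG, ← Nat.card_coe_set_eq, SetLike.coe_sort_coe, hKcard]
  calc n ^ 3 * k = n * n * (m + k) := by rw [hm]; ring
    _ = n * n * m + n ^ 2 * k := by ring
    _ ≤ t + n ^ 2 * k := Nat.add_le_add_right ht _

theorem eq_inf_of_coe_eq_mul {H : Subgroup G} (hH : (H : Set G) = (A : Set G) * (M : Set G))
    (hK : (K : Set G) = (B : Set G) * (M : Set G))
    (hAMB : (A : Set G) * (M : Set G) * (B : Set G) = univ) (hM : Nat.card M = n * k)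
    (hHcard : Nat.card H = n ^ 2 * k) (hKcard : Nat.card K = n ^ 2 * k)
    (hG : Nat.card G = n ^ 3 * k) : M = H ⊓ K := by
  have hHK : (H : Set G) * (K : Set G) = univ :=
    univ_subset_iff.1 (hAMB ▸ hH ▸ mul_subset_mul_left (left_le_of_coe_eq_mul hK))
  have hprod := card_mul_card_eq_card_mul_card_inf hHK
  rw [hHcard, hKcard, hG] at hprod
  have hcard : Nat.card ↥(H ⊓ K) = n * k :=
    (Nat.eq_of_mul_eq_mul_left (hG ▸ Nat.card_pos) (by rw [← hprod]; ring)).symm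
  exact eq_of_le_of_card_ge (le_inf (right_le_of_coe_eq_mul hH) (right_le_of_coe_eq_mul hK))
    (by rw [hcard, hM])

end SoftPlane

end

theorem stmt8_general {G : Type*} [Group G] [Finite G]
    (A B M AM BM : Subgroup G) (n k : ℕ)
    (hk : k = Nat.card (A ⊓ B : Subgroup G))
    (hA : Nat.card A = n * k) (hB : Nat.card B = n * k) (hM : Nat.card M = n * k)
    (hG : Nat.card G = n ^ 3 * k)
    (hAM : (AM : Set G) = (A : Set G) * (M : Set G))
    (hBM : (BM : Set G) = (B : Set G) * (M : Set G))
    (hAMcard : Nat.card AM = n ^ 2 * k) (hBMcard : Nat.card BM = n ^ 2 * k)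
    (h3 : ∀ g : G, ∃ a ∈ A, ∃ m ∈ M, ∃ b ∈ B, g = a * m * b)
    (h4 : ((A : Set G) * (B : Set G)) ∩ ((B : Set G) * (A : Set G)) =
      (A : Set G) ∪ (B : Set G))
    (M' AM' BM' : Subgroup G)
    (hM' : Nat.card M' = n * k)
    (hAM' : (AM' : Set G) = (A : Set G) * (M' : Set G))
    (hBM' : (BM' : Set G) = (B : Set G) * (M' : Set G))
    (hAMcard' : Nat.card AM' = n ^ 2 * k) (hBMcard' : Nat.card BM' = n ^ 2 * k)
    (h3' : ∀ g : G, ∃ a ∈ A, ∃ m ∈ M', ∃ b ∈ B, g = a * m * b) :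
    M' = M := by
  have hAB : Nat.card ↥(A ⊓ B) = k := hk.symm
  have hBA : Nat.card ↥(B ⊓ A) = k := inf_comm A B ▸ hAB
  have h4' : (B : Set G) * A ∩ (A * B) ⊆ B ∪ A := by
    rw [inter_comm, union_comm, h4]
  have hAMB := coe_mul_mul_eq_univ h3
  have hAM'B := coe_mul_mul_eq_univ h3'
  have hAM_eq : AM' = AM := SetLike.coe_injective <|
    (coe_eq_compl_mul_mul_sdiff hA hB hAB hG h4.le hAM' hAMcard' hAM'B).trans
      (coe_eq_compl_mul_mul_sdiff hA hB hAB hG h4.le hAM hAMcard hAMB).symm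
  have hBMA := coe_mul_mul_eq_univ_rev hAMB
  have hBM'A := coe_mul_mul_eq_univ_rev hAM'B
  have hBM_eq : BM' = BM := SetLike.coe_injective <|
    (coe_eq_compl_mul_mul_sdiff hB hA hBA hG h4' hBM' hBMcard' hBM'A).trans
      (coe_eq_compl_mul_mul_sdiff hB hA hBA hG h4' hBM hBMcard hBMA).symm
  rw [eq_inf_of_coe_eq_mul hAM' hBM' hAM'B hM' hAMcard' hBMcard' hG,
    eq_inf_of_coe_eq_mul hAM hBM hAMB hM hAMcard hBMcard hG, hAM_eq, hBM_eq]

/-- `M` is uniquely determined by `A` and `B`: if `M'` also satisfies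
conditions (1)–(4) with the same `A`, `B`, then `M' = M`. -/
theorem stmt8 {G : Type*} [Group G] [Finite G]
    (A B M AM BM : Subgroup G) (n k : ℕ) (hn : 1 < n)
    (hk : k = Nat.card (A ⊓ B : Subgroup G))
    (hA : Nat.card A = n * k) (hB : Nat.card B = n * k) (hM : Nat.card M = n * k)
    (hG : Nat.card G = n ^ 3 * k)
    (hAM : (AM : Set G) = (A : Set G) * (M : Set G))
    (hBM : (BM : Set G) = (B : Set G) * (M : Set G))
    (hAMcard : Nat.card AM = n ^ 2 * k) (hBMcard : Nat.card BM = n ^ 2 * k)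
    (h3 : ∀ g : G, ∃ a ∈ A, ∃ m ∈ M, ∃ b ∈ B, g = a * m * b)
    (h4 : ((A : Set G) * (B : Set G)) ∩ ((B : Set G) * (A : Set G)) =
      (A : Set G) ∪ (B : Set G))
    (M' AM' BM' : Subgroup G)
    (hM' : Nat.card M' = n * k)
    (hAM' : (AM' : Set G) = (A : Set G) * (M' : Set G))
    (hBM' : (BM' : Set G) = (B : Set G) * (M' : Set G))
    (hAMcard' : Nat.card AM' = n ^ 2 * k) (hBMcard' : Nat.card BM' = n ^ 2 * k)
    (h3' : ∀ g : G, ∃ a ∈ A, ∃ m ∈ M', ∃ b ∈ B, g = a * m * b) :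
    M' = M :=
  stmt8_general A B M AM BM n k hk hA hB hM hG hAM hBM hAMcard hBMcard h3 h4 M' AM' BM' hM' hAM'
    hBM' hAMcard' hBMcard' h3'
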